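/- arXiv:0712.3423 — 6 statements merged into one kernel-verified Lean document; each statement's English description precedes it below -/
import Mathlib

section
/- In any meadow (commutative ring with unit equipped with a total inverse operation satisfying (u⁻¹)⁻¹ = u and u·(u·u⁻¹) = u), the inverse of zero is zero: 0⁻¹ = 0. -/
theorem meadow_inv_zero {M : Type*} [CommRing M] (inv : M → M)
    (h1 : ∀ u, inv (inv u) = u) (h2 : ∀ u, u * (u * inv u) = u) :
    inv 0 = 0 := by
  have := h2 (inv 0)
  rw [h1] at this
  simpa using this.symm
end

section
/- In any meadow, the inverse of a negation is the negation of the inverse: (-u)⁻¹ = -(u⁻¹) for all u. -/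
theorem meadow_inv_neg {M : Type*} [CommRing M] (inv : M → M)
    (h1 : ∀ u, inv (inv u) = u) (h2 : ∀ u, u * (u * inv u) = u) :
    ∀ u : M, inv (-u) = -(inv u) := by
  intro u
  set a := inv u with ha
  set b := inv (-u) with hb
  have E1 : u * (u * a) = u := h2 u
  have E2 : (-u) * ((-u) * b) = -u := h2 (-u)
  have E3 : b * (b * (-u)) = b := by
    have := h2 (inv (-u)); rwa [h1] at this
  have E4 : a * (a * u) = a := by
    have := h2 (inv u); rwa [h1] at this
  linear_combination (b*b - a*b) * E1 + (a*a - a*b) * E2 - E3 - E4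
end

section
/- In any meadow, the inverse of a product is the product of the inverses: (u·v)⁻¹ = u⁻¹·v⁻¹ for all u, v. -/
theorem meadow_inv_mul {M : Type*} [CommRing M] (inv : M → M)
    (h1 : ∀ u, inv (inv u) = u) (h2 : ∀ u, u * (u * inv u) = u) :
    ∀ u v : M, inv (u * v) = inv u * inv v := by
  have h3 : ∀ u : M, inv u * (inv u * u) = inv u := by
    intro u; have := h2 (inv u); rwa [h1] at this
  have uniq : ∀ a y z : M, a * (a * y) = a → y * (y * a) = y →
      a * (a * z) = a → z * (z * a) = z → y = z := by
    intro a y z hay hya haz hza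
    have hy : y = y * a * z := by
      calc y = y * (y * a) := hya.symm
        _ = y * (y * (a * (a * z))) := by rw [haz]
        _ = (y * (y * a)) * (a * z) := by ring
        _ = y * (a * z) := by rw [hya]
        _ = y * a * z := by ring
    have hz : z = y * a * z := by
      calc z = z * (z * a) := hza.symm
        _ = z * (z * (a * (a * y))) := by rw [hay]
        _ = (z * (z * a)) * (a * y) := by ring
        _ = z * (a * y) := by rw [hza]
        _ = y * a * z := by ring
    exact hy.trans hz.symm
  intro u v
  exact uniq (u * v) (inv (u * v)) (inv u * inv v)
    (h2 (u * v)) (h3 (u * v))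
    (by linear_combination (v * (v * inv v)) * h2 u + u * h2 v)
    (by linear_combination (inv v * (inv v * v)) * h3 u + inv u * h3 v)
end

section
/- In a zero-totalized field of characteristic 0, for all p and q: if (1 - p/p)·q = 0, then p/p = (p/p + q/q)/(p/p + q/q). -/
theorem ztf_lemA_key {K : Type*} [Field K] [CharZero K] (p q : K)
    (h : (1 - p / p) * q = 0) :
    p / p = (p / p + q / q) / (p / p + q / q) := by
  rcases eq_or_ne p 0 with hp | hp
  · have hq : q = 0 := by simpa [hp] using h
    simp [hp, hq]
  · rcases eq_or_ne q 0 with hq | hq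
    · simp [div_self hp, hq]
    · rw [div_self hp, div_self hq]
      norm_num
end

section
/- In a zero-totalized field of characteristic 0, for all u and v: (1 - s/s)·v = 0 where s = u/u + (u-v)/(u-v). In words: if u = 0 and u - v = 0 then v = 0, expressed as a single zero-totalized-field identity. -/
theorem ztf_lemB_key {K : Type*} [Field K] [CharZero K] (u v : K) :
    (1 - (u / u + (u - v) / (u - v)) / (u / u + (u - v) / (u - v))) * v = 0 := by
  by_cases hu : u = 0
  · by_cases hv : u - v = 0
    · have hv0 : v = 0 := by rw [hu, zero_sub, neg_eq_zero] at hv; exact hv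
      simp [hv0]
    · have hv0 : v ≠ 0 := by rw [hu, zero_sub, neg_eq_zero] at hv; exact hv
      simp [hu, div_self hv0, div_self (show v/v - 0 ≠ 0 by simp [div_self hv0])]
  · by_cases hv : u - v = 0
    · simp [div_self hu, hv]
    · have h : u / u + (u - v) / (u - v) = 2 := by
        rw [div_self hu, div_self hv]; norm_num
      rw [h]
      simp [div_self (two_ne_zero (α := K))]
end

section
/- In the standard model of the core tuplix calculus, the interpretation of the zero test satisfies axiom T9: for elements d, e of a zero-totalized field D of characteristic 0, the set interpreting γ(d) ⊘ γ(e) equals the set interpreting γ(d/d + e/e), where [[γ(d)]] = {f_ε} if d = 0 and ∅ otherwise. -/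
/-- Conjunctive composition of partial functions (modeled via `Option`). -/
def pcomp {A D : Type*} [Field D] (f g : A → Option D) : A → Option D :=
  fun a =>
    match f a, g a with
    | none, none => none
    | some d, none => some d
    | none, some e => some e
    | some d, some e => some (d + e)

/-- Interpretation of the zero test `γ(d)`. -/
def ztest (A : Type*) {D : Type*} [Field D] [DecidableEq D] (d : D) :
    Set (A → Option D) :=
  if d = 0 then {fun _ => none} else ∅

theorem standard_model_T9 {A D : Type*} [Field D] [DecidableEq D] [CharZero D] (d e : D) :
    Set.image2 pcomp (ztest A d) (ztest A e) = ztest A (d / d + e / e) := by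
  unfold ztest
  by_cases hd : d = 0 <;> by_cases he : e = 0
  · subst hd; subst he
    rw [if_pos rfl, div_zero, add_zero, if_pos rfl, Set.image2_singleton]
    ext f
    simp only [Set.image_singleton, Set.mem_singleton_iff]
    constructor
    · rintro rfl; funext a; rfl
    · rintro rfl; funext a; rfl
  · simp [hd, he, div_self]
  · simp [hd, he, div_self]
  · rw [if_neg hd, if_neg he, if_neg (by rw [div_self hd, div_self he]; norm_num)]
    simp
end
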